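/- The knight's-move strategy wins for the first player: for every cell x of the 3×3 board with x ≠ (1,1) and every cell y that is a knight's move away from x (i.e., the coordinate differences of x and y are ±1 and ±2 in some order), the three-mark position {(1,1), x, y} is a P-position. -/

import Mathlib

/-!
The eight rotations and reflections of the board permute its lines, so they preserve deadness
and, by induction on the number of unmarked cells, the winner of the game. They act transitively
on the positions consisting of the centre and a knight's-move pair of cells (each such pair is a
corner and an edge cell not adjacent to it), so it suffices to search the game tree of the single
position `{(1,1), (0,0), (1,2)}`.
-/

/-- A cell of the 3×3 board. -/
abbrev Cell : Type := Fin 3 × Fin 3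

/-- The 8 winning lines: 3 rows, 3 columns, 2 main diagonals. -/
def notaktoLines : List (Finset Cell) :=
  [ {(0,0), (0,1), (0,2)}, {(1,0), (1,1), (1,2)}, {(2,0), (2,1), (2,2)},
    {(0,0), (1,0), (2,0)}, {(0,1), (1,1), (2,1)}, {(0,2), (1,2), (2,2)},
    {(0,0), (1,1), (2,2)}, {(0,2), (1,1), (2,0)} ]

/-- A position is dead if it contains all three cells of some line. -/
def Dead (p : Finset Cell) : Prop := ∃ l ∈ notaktoLines, l ⊆ p

/-- `FirstWins p` means the player to move from position `p` has a winning
strategy in misère X-only tic-tac-toe: there is a move to an unmarked cell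
that does not complete a line (a move completing a line loses immediately)
and after which the opponent, now to move, has no winning strategy. -/
def FirstWins (p : Finset Cell) : Prop :=
  ∃ x, ∃ _hx : x ∉ p, ¬ Dead (insert x p) ∧ ¬ FirstWins (insert x p)
termination_by 9 - p.card
decreasing_by
  have h1 : (insert x p).card = p.card + 1 := Finset.card_insert_of_notMem _hx
  have h2 : (insert x p).card ≤ 9 := by
    simpa using Finset.card_le_univ (insert x p)
  omega

/-- y is a knight'\''s move away from x: the coordinate differences are
±1 and ±2 in some order. -/
def KnightMove (x y : Cell) : Prop :=
  ((x.1 : ℤ) - (y.1 : ℤ)).natAbs = 1 ∧ ((x.2 : ℤ) - (y.2 : ℤ)).natAbs = 2 ∨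
  ((x.1 : ℤ) - (y.1 : ℤ)).natAbs = 2 ∧ ((x.2 : ℤ) - (y.2 : ℤ)).natAbs = 1

open Finset

instance : DecidablePred Dead := fun p =>
  inferInstanceAs (Decidable (∃ l ∈ notaktoLines, l ⊆ p))

instance : DecidableRel KnightMove := fun x y => by unfold KnightMove; infer_instance

theorem card_le_nine (p : Finset Cell) : #p ≤ 9 := by
  simpa using card_le_univ p

theorem firstWins_iff (p : Finset Cell) :
    FirstWins p ↔ ∃ x ∉ p, ¬ Dead (insert x p) ∧ ¬ FirstWins (insert x p) := by
  rw [FirstWins]; simp only [exists_prop]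

/-- Search of the game tree to depth `n`; it decides `FirstWins p` once `n ≥ 9 - #p`. -/
def firstWinsSearch : ℕ → Finset Cell → Bool
  | 0, _ => false
  | n + 1, p =>
    decide (∃ x ∉ p, ¬ Dead (insert x p) ∧ firstWinsSearch n (insert x p) = false)

theorem firstWinsSearch_iff :
    ∀ (n : ℕ) (p : Finset Cell), 9 ≤ n + #p → (firstWinsSearch n p = true ↔ FirstWins p)
  | 0, p, h => by
    have hp : p = univ := eq_univ_of_card p (by simpa using (card_le_nine p).antisymm (by omega))
    rw [firstWins_iff]
    simp [firstWinsSearch, hp]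
  | n + 1, p, h => by
    rw [firstWins_iff, firstWinsSearch, decide_eq_true_iff]
    refine exists_congr fun x => and_congr_right fun hx => and_congr_right fun _ => ?_
    rw [← firstWinsSearch_iff n (insert x p) (by rw [card_insert_of_notMem hx]; omega),
      Bool.not_eq_true]

instance : DecidablePred FirstWins := fun p =>
  decidable_of_iff _ (firstWinsSearch_iff (9 - #p) p (by have := card_le_nine p; omega))

section Symmetry

variable {σ : Cell ≃ Cell}

def MapsLines (σ : Cell ≃ Cell) : Prop :=
  ∀ l ∈ notaktoLines, l.map σ.toEmbedding ∈ notaktoLines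

instance : DecidablePred MapsLines := fun σ => by unfold MapsLines; infer_instance

theorem dead_map_iff (hσ : MapsLines σ) (hσ' : MapsLines σ.symm) (p : Finset Cell) :
    Dead (p.map σ.toEmbedding) ↔ Dead p := by
  constructor
  · rintro ⟨l, hl, hlp⟩
    exact ⟨l.map σ.symm.toEmbedding, hσ' l hl, map_symm_subset.2 hlp⟩
  · rintro ⟨l, hl, hlp⟩
    exact ⟨l.map σ.toEmbedding, hσ l hl, map_subset_map.2 hlp⟩

theorem firstWins_map_iff (hσ : MapsLines σ) (hσ' : MapsLines σ.symm) (p : Finset Cell) :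
    FirstWins (p.map σ.toEmbedding) ↔ FirstWins p := by
  rw [firstWins_iff, firstWins_iff, ← σ.exists_congr_right]
  refine exists_congr fun x => ?_
  have hinsert : insert (σ x) (p.map σ.toEmbedding) = (insert x p).map σ.toEmbedding :=
    (map_insert σ.toEmbedding x p).symm
  rw [hinsert, mem_map_equiv, σ.symm_apply_apply]
  refine and_congr_right fun hx => ?_
  rw [dead_map_iff hσ hσ', firstWins_map_iff hσ hσ' (insert x p)]
termination_by 9 - #p
decreasing_by have := card_le_nine (insert x p); rw [card_insert_of_notMem hx] at this ⊢; omega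

def reflectIf (b : Bool) : Fin 3 ≃ Fin 3 := bif b then Fin.revPerm else Equiv.refl _

/-- The eight symmetries of the square. -/
def squareSymmetry (r c t : Bool) : Cell ≃ Cell :=
  (Equiv.prodCongr (reflectIf r) (reflectIf c)).trans
    (bif t then Equiv.prodComm _ _ else Equiv.refl _)

set_option maxRecDepth 5000 in
theorem mapsLines_squareSymmetry :
    ∀ r c t : Bool,
      MapsLines (squareSymmetry r c t) ∧ MapsLines (squareSymmetry r c t).symm := by
  decide

theorem exists_squareSymmetry_map_eq_knight_position :
    ∀ x y : Cell, x ≠ (1, 1) → KnightMove x y →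
      ∃ r c t : Bool, ({(1, 1), x, y} : Finset Cell) =
        ({(1, 1), (0, 0), (1, 2)} : Finset Cell).map (squareSymmetry r c t).toEmbedding := by
  decide

end Symmetry

theorem knight_representative_P_position :
    ¬ Dead ({(1, 1), (0, 0), (1, 2)} : Finset Cell) ∧
      ¬ FirstWins ({(1, 1), (0, 0), (1, 2)} : Finset Cell) := by
  decide

/-- The knight'\''s-move strategy wins for the first player: for every cell
x ≠ (1,1) and every cell y a knight'\''s move away from x, the position
{(1,1), x, y} is a P-position. -/
theorem knights_move_P_position :
    ∀ x y : Cell, x ≠ (1, 1) → KnightMove x y →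
      ¬ Dead ({((1 : Fin 3), (1 : Fin 3)), x, y} : Finset Cell) ∧
        ¬ FirstWins ({((1 : Fin 3), (1 : Fin 3)), x, y} : Finset Cell) := by
  intro x y hx hxy
  obtain ⟨r, c, t, hp⟩ := exists_squareSymmetry_map_eq_knight_position x y hx hxy
  obtain ⟨hσ, hσ'⟩ := mapsLines_squareSymmetry r c t
  rw [hp, dead_map_iff hσ hσ', firstWins_map_iff hσ hσ']
  exact knight_representative_P_position
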